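/- Let χ : (A/p)^× → F_p^× be a multiplicative character whose lift to A is an F-algebra homomorphism (an evaluative character), let M be a p-torsion A-module, and let ψ : A/p → M be a nonzero A-module homomorphism. Then the Gauss-Thakur sum g(χ,ψ) = -Σ_{x ∈ (A/p)^×} χ(x)^{-1}⊗ψ(x) ∈ F_p⊗_F M is nonzero. -/
import Mathlib


open TensorProduct

attribute [local instance] Ideal.Quotient.field

/-- for an evaluative character (an `F`-algebra homomorphism `χ : A → F_p`
vanishing exactly on `p`) and a nonzero `A`-module homomorphism `ψ : A/p → M` into a
`p`-torsion module `M`, the Gauss–Thakur sum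
`g(χ,ψ) = -∑_{x ∈ (A/p)^×} χ(x)⁻¹ ⊗ ψ(x)` is nonzero in `F_p ⊗_F M`. -/
theorem stmt12 (F : Type*) [Field F] [Fintype F]
    (A : Type*) [CommRing A] [Algebra F A]
    (p : Ideal A) [p.IsMaximal] [Fintype (A ⧸ p)] [DecidableEq (A ⧸ p)]
    (M : Type*) [AddCommGroup M] [Module A M] [Module F M] [IsScalarTower F A M]
    (htors : ∀ a ∈ p, ∀ m : M, a • m = 0)
    (χ : A →ₐ[F] (A ⧸ p)) (hker : ∀ a : A, χ a = 0 ↔ a ∈ p)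
    (ψ : (A ⧸ p) →ₗ[A] M) (hψ : ψ ≠ 0) :
    (- ∑ x : (A ⧸ p)ˣ,
        ((Ideal.Quotient.lift p (χ : A →+* A ⧸ p)
            (fun a ha => (hker a).mpr ha)) ((x : A ⧸ p)))⁻¹ ⊗ₜ[F] ψ ((x : A ⧸ p)) :
      (A ⧸ p) ⊗[F] M) ≠ 0 := by
  classical
  -- M is a module over K := A ⧸ p
  have htors' : Module.IsTorsionBySet A M (p : Set A) := fun m a => htors a a.2 m
  letI : Module (A ⧸ p) M := htors'.module
  haveI : IsScalarTower F (A ⧸ p) M := htors'.isScalarTower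
  -- the induced F-algebra endomorphism of K, and its inverse
  let σ : (A ⧸ p) →ₐ[F] (A ⧸ p) :=
    Ideal.Quotient.liftₐ p χ (fun a ha => (hker a).mpr ha)
  have hσinj : Function.Injective σ := RingHom.injective (σ : (A ⧸ p) →+* (A ⧸ p))
  have hσbij : Function.Bijective σ := (Finite.injective_iff_bijective).mp hσinj
  let e : (A ⧸ p) ≃ₐ[F] (A ⧸ p) := AlgEquiv.ofBijective σ hσbij
  have hσe : ∀ z : A ⧸ p,
      (Ideal.Quotient.lift p (χ : A →+* A ⧸ p) (fun a ha => (hker a).mpr ha)) z = e z := by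
    intro z
    obtain ⟨a, rfl⟩ := Ideal.Quotient.mk_surjective z
    simp [e, σ, Ideal.Quotient.liftₐ_apply]
  -- the evaluation map T : K ⊗[F] M → M, k ⊗ m ↦ e⁻¹(k) • m
  let B : (A ⧸ p) →ₗ[F] M →ₗ[F] M := LinearMap.mk₂ F (fun k m => (e.symm k) • m)
    (fun k₁ k₂ m => show e.symm (k₁ + k₂) • m = e.symm k₁ • m + e.symm k₂ • m by
      rw [map_add, add_smul])
    (fun c k m => show e.symm (c • k) • m = c • (e.symm k • m) by
      rw [map_smul, smul_assoc])
    (fun k m₁ m₂ => smul_add _ _ _)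
    (fun c k m => smul_comm _ _ _)
  let T : (A ⧸ p) ⊗[F] M →ₗ[F] M := TensorProduct.lift B
  -- key facts about ψ as a K-semilinear map
  have hψK : ∀ z y : A ⧸ p, z • ψ y = ψ (z * y) := by
    intro z y
    obtain ⟨a, rfl⟩ := Ideal.Quotient.mk_surjective z
    rw [htors'.mk_smul, ← map_smul]
    congr 1
  have hψ1 : ψ 1 ≠ 0 := by
    intro h
    apply hψ
    refine LinearMap.ext fun z => ?_
    obtain ⟨a, rfl⟩ := Ideal.Quotient.mk_surjective z
    have := hψK (Ideal.Quotient.mk p a) 1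
    rw [mul_one, htors'.mk_smul] at this
    simp [← this, h]
  -- compute T of the Gauss–Thakur sum
  intro hg
  have hT : T (- ∑ x : (A ⧸ p)ˣ,
      ((Ideal.Quotient.lift p (χ : A →+* A ⧸ p)
          (fun a ha => (hker a).mpr ha)) ((x : A ⧸ p)))⁻¹ ⊗ₜ[F] ψ ((x : A ⧸ p))) = ψ 1 := by
    rw [map_neg, map_sum]
    have hterm : ∀ x : (A ⧸ p)ˣ,
        T ((((Ideal.Quotient.lift p (χ : A →+* A ⧸ p)
            (fun a ha => (hker a).mpr ha)) ((x : A ⧸ p)))⁻¹) ⊗ₜ[F] ψ ((x : A ⧸ p))) = ψ 1 := by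
      intro x
      have : T ((((Ideal.Quotient.lift p (χ : A →+* A ⧸ p)
          (fun a ha => (hker a).mpr ha)) ((x : A ⧸ p)))⁻¹) ⊗ₜ[F] ψ ((x : A ⧸ p)))
          = (e.symm ((e (x : A ⧸ p))⁻¹)) • ψ ((x : A ⧸ p)) := by
        simp only [T, B, TensorProduct.lift.tmul, LinearMap.mk₂_apply, hσe]
      rw [this, map_inv₀, AlgEquiv.symm_apply_apply, hψK,
        inv_mul_cancel₀ (Units.ne_zero x), ]
    rw [Finset.sum_congr rfl (fun x _ => hterm x), Finset.sum_const, Finset.card_univ]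
    -- card Kˣ • ψ 1 = -ψ 1
    have hcard : (Fintype.card (A ⧸ p)) • ψ (1 : A ⧸ p) = 0 := by
      rw [← Nat.cast_smul_eq_nsmul (A ⧸ p), FiniteField.cast_card_eq_zero, zero_smul]
    have hcard' : (Fintype.card (A ⧸ p)ˣ) • ψ (1 : A ⧸ p) = - ψ 1 := by
      have h1 : Fintype.card (A ⧸ p)ˣ + 1 = Fintype.card (A ⧸ p) := by
        rw [Fintype.card_units]
        have : 0 < Fintype.card (A ⧸ p) := Fintype.card_pos
        omega
      rw [← h1, add_smul, one_smul] at hcard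
      exact eq_neg_of_add_eq_zero_left hcard
    rw [hcard', neg_neg]
  rw [hg, map_zero] at hT
  exact hψ1 hT.symm
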